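/- arXiv:2403.11359 — 2 statements merged into one kernel-verified Lean document; each statement's English description precedes it below -/
import Mathlib

section
/- For all n ≥ 1 and k ≥ 1, the number of Dyck words of semilength n with at most k peaks is equal to the number of permutations of {1,…,n} that avoid the pattern 132 and also avoid the strictly decreasing pattern (k+1)k⋯21 of length k+1. -/
/-- A Dyck word of semilength `n`, as a list of booleans read left to right,
where `true` is an up-step `U` and `false` is a down-step `D`:
exactly `n` of each letter, and every prefix has at least as many `U`'s as `D`'s. -/
def IsDyckWord (n : ℕ) (w : List Bool) : Prop :=
  w.count true = n ∧ w.count false = n ∧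
    ∀ k : ℕ, (w.take k).count false ≤ (w.take k).count true

/-- The number of peaks of a word: positions where a `U` is immediately followed by a `D`. -/
def numPeaks (w : List Bool) : ℕ := (w.zip w.tail).count (true, false)

/-- The word `U^a D^b`. -/
def upDown (a b : ℕ) : List Bool :=
  List.replicate a true ++ List.replicate b false

/-- A permutation `π` of `{0, …, n-1}` contains the pattern `σ` (a permutation of
`{0, …, m-1}`) if some subsequence of values of `π` is in the same relative order as `σ`. -/
def ContainsPattern {n m : ℕ} (π : Equiv.Perm (Fin n)) (σ : Equiv.Perm (Fin m)) : Prop :=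
  ∃ f : Fin m → Fin n, StrictMono f ∧ ∀ a b : Fin m, π (f a) < π (f b) ↔ σ a < σ b

/-- A permutation avoids a pattern if it does not contain it. -/
def AvoidsPattern {n m : ℕ} (π : Equiv.Perm (Fin n)) (σ : Equiv.Perm (Fin m)) : Prop :=
  ¬ ContainsPattern π σ

/-- The pattern 132 (0-indexed: 021). -/
def pat132 : Equiv.Perm (Fin 3) where
  toFun := ![0, 2, 1]
  invFun := ![0, 2, 1]
  left_inv := by intro x; fin_cases x <;> rfl
  right_inv := by intro x; fin_cases x <;> rfl

/-- The pattern 321 (0-indexed: 210). -/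
def pat321 : Equiv.Perm (Fin 3) where
  toFun := ![2, 1, 0]
  invFun := ![2, 1, 0]
  left_inv := by intro x; fin_cases x <;> rfl
  right_inv := by intro x; fin_cases x <;> rfl

/-- The pattern 4321 (0-indexed: 3210). -/
def pat4321 : Equiv.Perm (Fin 4) where
  toFun := ![3, 2, 1, 0]
  invFun := ![3, 2, 1, 0]
  left_inv := by intro x; fin_cases x <;> rfl
  right_inv := by intro x; fin_cases x <;> rfl

/-- The pattern 4231 (0-indexed: 3120). -/
def pat4231 : Equiv.Perm (Fin 4) where
  toFun := ![3, 1, 2, 0]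
  invFun := ![3, 1, 2, 0]
  left_inv := by intro x; fin_cases x <;> rfl
  right_inv := by intro x; fin_cases x <;> rfl

/-- The strictly decreasing pattern `(k+1)k⋯21` of length `k+1`. -/
def patDesc (k : ℕ) : Equiv.Perm (Fin (k+1)) where
  toFun := Fin.rev
  invFun := Fin.rev
  left_inv := Fin.rev_rev
  right_inv := Fin.rev_rev

/-- `w` has exactly three peaks and, in its (unique) decomposition
`U^{a₁}D^{b₁}U^{a₂}D^{b₂}U^{a₃}D^{b₃}` with all exponents positive,
`a₂ = 1` or `b₂ = 1`. -/
def ThreePeakMiddleOne (w : List Bool) : Prop :=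
  numPeaks w = 3 ∧ ∃ a₁ b₁ a₂ b₂ a₃ b₃ : ℕ,
    0 < a₁ ∧ 0 < b₁ ∧ 0 < a₂ ∧ 0 < b₂ ∧ 0 < a₃ ∧ 0 < b₃ ∧
    w = upDown a₁ b₁ ++ upDown a₂ b₂ ++ upDown a₃ b₃ ∧ (a₂ = 1 ∨ b₂ = 1)

/-- `i` is (the position of) a left-to-right minimum of `π`. -/
def IsLtrMin {n : ℕ} (π : Equiv.Perm (Fin n)) (i : Fin n) : Prop :=
  ∀ j : Fin n, j < i → π i < π j
open Equiv

/-- `π` has a strictly decreasing subsequence of length `m`. -/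
def DescSeq {n : ℕ} (π : Equiv.Perm (Fin n)) (m : ℕ) : Prop :=
  ∃ f : Fin m → Fin n, StrictMono f ∧ ∀ a b : Fin m, a < b → π (f b) < π (f a)

lemma containsPatDesc_iff {n k : ℕ} (π : Equiv.Perm (Fin n)) :
    ContainsPattern π (patDesc k) ↔ DescSeq π (k+1) := by
  constructor
  · rintro ⟨f, hf, hiff⟩
    exact ⟨f, hf, fun a b hab => (hiff b a).2 (by
      show (patDesc k) b < (patDesc k) a
      simpa [patDesc] using Fin.rev_lt_rev.mpr hab)⟩
  · rintro ⟨f, hf, hdes⟩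
    refine ⟨f, hf, fun a b => ?_⟩
    have hd : (patDesc k) a < (patDesc k) b ↔ b < a := by
      simp [patDesc, Fin.rev_lt_rev]
    rw [hd]
    constructor
    · intro h
      rcases lt_trichotomy a b with h1 | h1 | h1
      · exact absurd (hdes a b h1) (by omega)
      · subst h1; exact absurd h (lt_irrefl _)
      · exact h1
    · exact fun h => hdes b a h

lemma contains132_iff {n : ℕ} (π : Equiv.Perm (Fin n)) :
    ContainsPattern π pat132 ↔ ∃ i j k : Fin n, i < j ∧ j < k ∧ π i < π k ∧ π k < π j := by
  constructor
  · rintro ⟨f, hf, hiff⟩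
    refine ⟨f 0, f 1, f 2, hf (by decide), hf (by decide), ?_, ?_⟩
    · exact (hiff 0 2).2 (by decide)
    · exact (hiff 2 1).2 (by decide)
  · rintro ⟨i, j, k, hij, hjk, h1, h2⟩
    refine ⟨![i, j, k], ?_, ?_⟩
    · intro a b hab
      fin_cases a <;> fin_cases b <;>
        simp_all <;> first | exact hij | exact hjk | exact hij.trans hjk | omega
    · intro a b
      have h3 : π i < π j := h1.trans h2
      fin_cases a <;> fin_cases b <;>
        simp_all [pat132] <;> omega

lemma descSeq_mono {n : ℕ} (π : Equiv.Perm (Fin n)) {m m' : ℕ} (h : m' ≤ m) :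
    DescSeq π m → DescSeq π m' := by
  rintro ⟨f, hf, hd⟩
  exact ⟨f ∘ Fin.castLE h, hf.comp (Fin.strictMono_castLE h),
    fun a b hab => hd _ _ (by simpa using hab)⟩

lemma descSeq_zero {n : ℕ} (π : Equiv.Perm (Fin n)) : DescSeq π 0 :=
  ⟨Fin.elim0, fun a => a.elim0, fun a => a.elim0⟩

lemma descSeq_one {n : ℕ} (hn : 0 < n) (π : Equiv.Perm (Fin n)) : DescSeq π 1 :=
  ⟨fun _ => ⟨0, hn⟩, fun a b hab => by omega, fun a b hab => by omega⟩
/-- forward function for `pglue`. -/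
def pglueFun {n a b : ℕ} (hab : a + 1 + b = n) (σ : Equiv.Perm (Fin a)) (τ : Equiv.Perm (Fin b))
    (x : Fin n) : Fin n :=
  if h : x.val < a then ⟨b + (σ ⟨x.val, h⟩).val, by have := (σ ⟨x.val, h⟩).isLt; omega⟩
  else if h2 : x.val = a then ⟨a + b, by omega⟩
  else ⟨(τ ⟨x.val - (a+1), by have := x.isLt; omega⟩).val, by
    have := (τ ⟨x.val - (a+1), by have := x.isLt; omega⟩).isLt; omega⟩

lemma pglueFun_L {n a b : ℕ} (hab : a + 1 + b = n) (σ : Equiv.Perm (Fin a)) (τ : Equiv.Perm (Fin b))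
    (x : Fin n) (h : x.val < a) :
    (pglueFun hab σ τ x).val = b + (σ ⟨x.val, h⟩).val := by
  unfold pglueFun; rw [dif_pos h]

lemma pglueFun_M {n a b : ℕ} (hab : a + 1 + b = n) (σ : Equiv.Perm (Fin a)) (τ : Equiv.Perm (Fin b))
    (x : Fin n) (h : x.val = a) :
    (pglueFun hab σ τ x).val = a + b := by
  unfold pglueFun; rw [dif_neg (by omega), dif_pos h]

lemma pglueFun_R {n a b : ℕ} (hab : a + 1 + b = n) (σ : Equiv.Perm (Fin a)) (τ : Equiv.Perm (Fin b))
    (x : Fin n) (h : a < x.val) :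
    (pglueFun hab σ τ x).val = (τ ⟨x.val - (a+1), by have := x.isLt; omega⟩).val := by
  unfold pglueFun; rw [dif_neg (by omega), dif_neg (by omega)]

/-- Glue `σ` (acting on top values, at the left), a maximum, and `τ` (acting on
bottom values, at the right) into a permutation of `Fin n`, `n = a + 1 + b`. -/
def pglue {n a b : ℕ} (hab : a + 1 + b = n) (σ : Equiv.Perm (Fin a)) (τ : Equiv.Perm (Fin b)) :
    Equiv.Perm (Fin n) where
  toFun := pglueFun hab σ τ
  invFun y :=
    if h : y.val < b then ⟨a + 1 + (τ.symm ⟨y.val, h⟩).val, by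
      have := (τ.symm ⟨y.val, h⟩).isLt; omega⟩
    else if h2 : y.val < a + b then ⟨(σ.symm ⟨y.val - b, by omega⟩).val, by
      have := (σ.symm ⟨y.val - b, by omega⟩).isLt; omega⟩
    else ⟨a, by omega⟩
  left_inv x := by
    beta_reduce
    rcases lt_trichotomy x.val a with h | h | h
    · have e := pglueFun_L hab σ τ x h
      set y := pglueFun hab σ τ x with hy
      have hσ := (σ ⟨x.val, h⟩).isLt
      rw [dif_neg (by omega), dif_pos (show y.val < a + b by omega)]
      have e2 : (⟨y.val - b, by omega⟩ : Fin a) = σ ⟨x.val, h⟩ := by ext; simp only [Fin.val_mk]; omega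
      ext; simp only [e2, Equiv.symm_apply_apply, Fin.val_mk]
    · have e := pglueFun_M hab σ τ x h
      set y := pglueFun hab σ τ x with hy
      rw [dif_neg (by omega), dif_neg (by omega)]
      ext; simp only [Fin.val_mk]; omega
    · have e := pglueFun_R hab σ τ x h
      set y := pglueFun hab σ τ x with hy
      have hτ := (τ ⟨x.val - (a+1), by have := x.isLt; omega⟩).isLt
      rw [dif_pos (show y.val < b by omega)]
      have e2 : (⟨y.val, by omega⟩ : Fin b) = τ ⟨x.val - (a+1), by have := x.isLt; omega⟩ := by
        ext; simp only [Fin.val_mk]; omega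
      ext; simp only [e2, Equiv.symm_apply_apply, Fin.val_mk]; have := x.isLt; omega
  right_inv y := by
    beta_reduce
    rcases lt_trichotomy y.val b with h | h | h
    · rw [dif_pos h]
      have h2 := (τ.symm ⟨y.val, h⟩).isLt
      set x : Fin n := ⟨a + 1 + (τ.symm ⟨y.val, h⟩).val, by omega⟩ with hx
      have e := pglueFun_R hab σ τ x (by simp [hx]; omega)
      have e2 : (⟨x.val - (a+1), by have := x.isLt; omega⟩ : Fin b) = τ.symm ⟨y.val, h⟩ := by
        ext; simp [hx]
      rw [e2, Equiv.apply_symm_apply] at e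
      ext; rw [e]
    · rw [dif_neg (by omega)]
      rcases Nat.lt_or_ge y.val (a+b) with h2 | h2
      · rw [dif_pos h2]
        have h3 := (σ.symm ⟨y.val - b, by omega⟩).isLt
        set x : Fin n := ⟨(σ.symm ⟨y.val - b, by omega⟩).val, by omega⟩ with hx
        have e := pglueFun_L hab σ τ x h3
        have e2 : (⟨x.val, h3⟩ : Fin a) = σ.symm ⟨y.val - b, by omega⟩ := by ext; simp [hx]
        rw [e2, Equiv.apply_symm_apply] at e
        ext; rw [e]; simp only []; omega
      · rw [dif_neg (by omega)]
        have e := pglueFun_M hab σ τ ⟨a, by omega⟩ rfl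
        ext; rw [e]; have := y.isLt; omega
    · rw [dif_neg (by omega)]
      rcases Nat.lt_or_ge y.val (a+b) with h2 | h2
      · rw [dif_pos h2]
        have h3 := (σ.symm ⟨y.val - b, by omega⟩).isLt
        set x : Fin n := ⟨(σ.symm ⟨y.val - b, by omega⟩).val, by omega⟩ with hx
        have e := pglueFun_L hab σ τ x h3
        have e2 : (⟨x.val, h3⟩ : Fin a) = σ.symm ⟨y.val - b, by omega⟩ := by ext; simp [hx]
        rw [e2, Equiv.apply_symm_apply] at e
        ext; rw [e]; simp only []; omega
      · rw [dif_neg (by omega)]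
        have e := pglueFun_M hab σ τ ⟨a, by omega⟩ rfl
        ext; rw [e]; have := y.isLt; omega

lemma pglue_L {n a b : ℕ} (hab : a + 1 + b = n) (σ : Equiv.Perm (Fin a)) (τ : Equiv.Perm (Fin b))
    (x : Fin n) (h : x.val < a) :
    ((pglue hab σ τ) x).val = b + (σ ⟨x.val, h⟩).val := pglueFun_L hab σ τ x h

lemma pglue_M {n a b : ℕ} (hab : a + 1 + b = n) (σ : Equiv.Perm (Fin a)) (τ : Equiv.Perm (Fin b))
    (x : Fin n) (h : x.val = a) :
    ((pglue hab σ τ) x).val = a + b := pglueFun_M hab σ τ x h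

lemma pglue_R {n a b : ℕ} (hab : a + 1 + b = n) (σ : Equiv.Perm (Fin a)) (τ : Equiv.Perm (Fin b))
    (x : Fin n) (h : a < x.val) :
    ((pglue hab σ τ) x).val = (τ ⟨x.val - (a+1), by have := x.isLt; omega⟩).val :=
  pglueFun_R hab σ τ x h
lemma pglue_L' {n a b : ℕ} (hab : a + 1 + b = n) (σ : Equiv.Perm (Fin a))
    (τ : Equiv.Perm (Fin b)) (x : Fin n) (y : Fin a) (h : x.val = y.val) :
    ((pglue hab σ τ) x).val = b + (σ y).val := by
  have hx : x.val < a := h ▸ y.isLt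
  rw [pglue_L hab σ τ x hx]
  have e : (⟨x.val, hx⟩ : Fin a) = y := Fin.ext h
  rw [e]

lemma pglue_R' {n a b : ℕ} (hab : a + 1 + b = n) (σ : Equiv.Perm (Fin a))
    (τ : Equiv.Perm (Fin b)) (x : Fin n) (y : Fin b) (h : x.val = a + 1 + y.val) :
    ((pglue hab σ τ) x).val = (τ y).val := by
  have hx : a < x.val := by omega
  rw [pglue_R hab σ τ x hx]
  have e : (⟨x.val - (a+1), by have := x.isLt; omega⟩ : Fin b) = y := by
    ext; simp only [Fin.val_mk]; omega
  rw [e]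

lemma pglue_val_le {n a b : ℕ} (hab : a + 1 + b = n) (σ : Equiv.Perm (Fin a))
    (τ : Equiv.Perm (Fin b)) (x : Fin n) : ((pglue hab σ τ) x).val ≤ a + b := by
  have := ((pglue hab σ τ) x).isLt; omega

lemma pglue_L_lb {n a b : ℕ} (hab : a + 1 + b = n) (σ : Equiv.Perm (Fin a))
    (τ : Equiv.Perm (Fin b)) (x : Fin n) (h : x.val < a) :
    b ≤ ((pglue hab σ τ) x).val ∧ ((pglue hab σ τ) x).val < a + b := by
  have := pglue_L hab σ τ x h
  have := (σ ⟨x.val, h⟩).isLt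
  omega

lemma pglue_R_ub {n a b : ℕ} (hab : a + 1 + b = n) (σ : Equiv.Perm (Fin a))
    (τ : Equiv.Perm (Fin b)) (x : Fin n) (h : a < x.val) :
    ((pglue hab σ τ) x).val < b := by
  have e := pglue_R' hab σ τ x ⟨x.val - (a+1), by have := x.isLt; omega⟩ (by
    simp only [Fin.val_mk]; have := x.isLt; omega)
  rw [e]
  exact (τ _).isLt

lemma contains132_pglue {n a b : ℕ} (hab : a + 1 + b = n) (σ : Equiv.Perm (Fin a))
    (τ : Equiv.Perm (Fin b)) :
    ContainsPattern (pglue hab σ τ) pat132 ↔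
      ContainsPattern σ pat132 ∨ ContainsPattern τ pat132 := by
  rw [contains132_iff, contains132_iff, contains132_iff]
  constructor
  · rintro ⟨I, J, K, hIJ, hJK, h1, h2⟩
    rcases lt_trichotomy I.val a with hI | hI | hI
    · rcases lt_trichotomy K.val a with hK | hK | hK
      · -- all in L
        have hJ : J.val < a := lt_trans hJK hK
        left
        refine ⟨⟨I.val, hI⟩, ⟨J.val, hJ⟩, ⟨K.val, hK⟩, hIJ, hJK, ?_, ?_⟩
        · have eI := pglue_L' hab σ τ I ⟨I.val, hI⟩ rfl
          have eK := pglue_L' hab σ τ K ⟨K.val, hK⟩ rfl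
          rw [Fin.lt_def] at h1 ⊢; omega
        · have eJ := pglue_L' hab σ τ J ⟨J.val, hJ⟩ rfl
          have eK := pglue_L' hab σ τ K ⟨K.val, hK⟩ rfl
          rw [Fin.lt_def] at h2 ⊢; omega
      · exfalso
        have eK := pglue_M hab σ τ K hK
        have := pglue_val_le hab σ τ J
        rw [Fin.lt_def] at h2; omega
      · exfalso
        have := pglue_R_ub hab σ τ K hK
        have := (pglue_L_lb hab σ τ I hI).1
        rw [Fin.lt_def] at h1; omega
    · exfalso
      have eI := pglue_M hab σ τ I hI
      have := pglue_val_le hab σ τ K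
      rw [Fin.lt_def] at h1; omega
    · -- all in R
      have hJ : a < J.val := lt_trans hI hIJ
      have hK : a < K.val := lt_trans hJ hJK
      right
      have hIn := I.isLt; have hJn := J.isLt; have hKn := K.isLt
      obtain ⟨iB, hiB⟩ : ∃ y : Fin b, I.val = a + 1 + y.val :=
        ⟨⟨I.val - (a+1), by omega⟩, by simp only [Fin.val_mk]; omega⟩
      obtain ⟨jB, hjB⟩ : ∃ y : Fin b, J.val = a + 1 + y.val :=
        ⟨⟨J.val - (a+1), by omega⟩, by simp only [Fin.val_mk]; omega⟩
      obtain ⟨kB, hkB⟩ : ∃ y : Fin b, K.val = a + 1 + y.val :=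
        ⟨⟨K.val - (a+1), by omega⟩, by simp only [Fin.val_mk]; omega⟩
      refine ⟨iB, jB, kB,
        by rw [Fin.lt_def] at hIJ ⊢; omega,
        by rw [Fin.lt_def] at hJK ⊢; omega, ?_, ?_⟩
      · have eI := pglue_R' hab σ τ I iB hiB
        have eK := pglue_R' hab σ τ K kB hkB
        rw [Fin.lt_def] at h1 ⊢; omega
      · have eJ := pglue_R' hab σ τ J jB hjB
        have eK := pglue_R' hab σ τ K kB hkB
        rw [Fin.lt_def] at h2 ⊢; omega
  · rintro (⟨i, j, k, hij, hjk, h1, h2⟩ | ⟨i, j, k, hij, hjk, h1, h2⟩)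
    · have hi := i.isLt; have hj := j.isLt; have hk := k.isLt
      refine ⟨⟨i.val, by omega⟩, ⟨j.val, by omega⟩, ⟨k.val, by omega⟩,
        by rw [Fin.lt_def] at hij ⊢; exact hij, by rw [Fin.lt_def] at hjk ⊢; exact hjk, ?_, ?_⟩
      · have eI := pglue_L' hab σ τ ⟨i.val, by omega⟩ i rfl
        have eK := pglue_L' hab σ τ ⟨k.val, by omega⟩ k rfl
        rw [Fin.lt_def] at h1 ⊢; omega
      · have eJ := pglue_L' hab σ τ ⟨j.val, by omega⟩ j rfl
        have eK := pglue_L' hab σ τ ⟨k.val, by omega⟩ k rfl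
        rw [Fin.lt_def] at h2 ⊢; omega
    · have hi := i.isLt; have hj := j.isLt; have hk := k.isLt
      refine ⟨⟨a + 1 + i.val, by omega⟩, ⟨a + 1 + j.val, by omega⟩, ⟨a + 1 + k.val, by omega⟩,
        by rw [Fin.lt_def] at hij ⊢; simp only [Fin.val_mk]; omega,
        by rw [Fin.lt_def] at hjk ⊢; simp only [Fin.val_mk]; omega, ?_, ?_⟩
      · have eI := pglue_R' hab σ τ ⟨a + 1 + i.val, by omega⟩ i rfl
        have eK := pglue_R' hab σ τ ⟨a + 1 + k.val, by omega⟩ k rfl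
        rw [Fin.lt_def] at h1 ⊢; omega
      · have eJ := pglue_R' hab σ τ ⟨a + 1 + j.val, by omega⟩ j rfl
        have eK := pglue_R' hab σ τ ⟨a + 1 + k.val, by omega⟩ k rfl
        rw [Fin.lt_def] at h2 ⊢; omega
lemma initseg {m : ℕ} (s : Finset (Fin m)) (hdc : ∀ x ∈ s, ∀ y, y ≤ x → y ∈ s) (x : Fin m) :
    x ∈ s ↔ x.val < s.card := by
  constructor
  · intro hx
    have hsub : Finset.Iic x ⊆ s := fun y hy => hdc x hx y (Finset.mem_Iic.mp hy)
    have := Finset.card_le_card hsub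
    rw [Fin.card_Iic] at this
    omega
  · intro hx
    by_contra hxs
    have hsub : s ⊆ Finset.Iio x := by
      intro y hy
      rw [Finset.mem_Iio]
      by_contra hyx
      exact hxs (hdc y hy x (le_of_not_gt hyx))
    have := Finset.card_le_card hsub
    rw [Fin.card_Iio] at this
    omega

lemma descSeq_pglue {n a b : ℕ} (hab : a + 1 + b = n) (σ : Equiv.Perm (Fin a))
    (τ : Equiv.Perm (Fin b)) (m : ℕ) :
    DescSeq (pglue hab σ τ) m ↔
      (∃ c d, c + d = m ∧ DescSeq σ c ∧ DescSeq τ d) ∨ (1 ≤ m ∧ DescSeq τ (m-1)) := by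
  constructor
  · rintro ⟨f, hf, hfd⟩
    by_cases hM : ∃ t, (f t).val = a
    · -- the maximum is used; it must be the first element of the chain
      obtain ⟨t, ht⟩ := hM
      right
      have hm : 1 ≤ m := by have := t.isLt; omega
      have ht0 : t.val = 0 := by
        by_contra h0
        have hs : (⟨0, by omega⟩ : Fin m) < t := by rw [Fin.lt_def]; simp only [Fin.val_mk]; omega
        have hlt := hfd _ _ hs
        have hfs : (f ⟨0, by omega⟩).val < a := by
          have := hf hs
          rw [Fin.lt_def] at this; omega
        have e1 := pglue_M hab σ τ (f t) ht
        have e2 := (pglue_L_lb hab σ τ (f ⟨0, by omega⟩) hfs).2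
        rw [Fin.lt_def] at hlt
        omega
      refine ⟨hm, ?_⟩
      obtain ⟨F2, hF2⟩ : ∃ F2 : Fin (m-1) → Fin m, ∀ s, (F2 s).val = s.val + 1 :=
        ⟨fun s => ⟨s.val + 1, by have := s.isLt; omega⟩, fun s => rfl⟩
      have hgt : ∀ s : Fin (m-1), a < (f (F2 s)).val := by
        intro s
        have : t < F2 s := by rw [Fin.lt_def, hF2]; omega
        have := hf this
        rw [Fin.lt_def] at this
        omega
      obtain ⟨g, hg⟩ : ∃ g : Fin (m-1) → Fin b, ∀ s, (f (F2 s)).val = a + 1 + (g s).val := by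
        refine ⟨fun s => ⟨(f (F2 s)).val - (a+1), by have := (f (F2 s)).isLt; have := hgt s; omega⟩,
          fun s => ?_⟩
        simp only [Fin.val_mk]
        have := hgt s
        omega
      refine ⟨g, ?_, ?_⟩
      · intro s1 s2 hs
        have h12 : F2 s1 < F2 s2 := by rw [Fin.lt_def, hF2, hF2]; rw [Fin.lt_def] at hs; omega
        have := hf h12
        rw [Fin.lt_def] at this ⊢
        have e1 := hg s1; have e2 := hg s2
        omega
      · intro s1 s2 hs
        have h12 : F2 s1 < F2 s2 := by rw [Fin.lt_def, hF2, hF2]; rw [Fin.lt_def] at hs; omega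
        have hlt := hfd _ _ h12
        have e1 := pglue_R' hab σ τ (f (F2 s1)) (g s1) (hg s1)
        have e2 := pglue_R' hab σ τ (f (F2 s2)) (g s2) (hg s2)
        rw [Fin.lt_def] at hlt ⊢
        omega
    · -- the maximum is not used
      push_neg at hM
      left
      set S : Finset (Fin m) := Finset.filter (fun t => (f t).val < a) Finset.univ with hS
      set c := S.card with hc
      have hdc : ∀ x ∈ S, ∀ y, y ≤ x → y ∈ S := by
        intro x hx y hyx
        rw [hS, Finset.mem_filter] at hx ⊢
        refine ⟨Finset.mem_univ _, ?_⟩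
        have := hf.monotone hyx
        rw [Fin.le_def] at this
        omega
      have key : ∀ t : Fin m, (f t).val < a ↔ t.val < c := by
        intro t
        rw [← initseg S hdc t, hS, Finset.mem_filter]
        simp
      have hcm : c ≤ m := by
        rw [hc]
        calc S.card ≤ Finset.univ.card := Finset.card_le_univ S
        _ = m := by simp
      refine ⟨c, m - c, by omega, ?_, ?_⟩
      · -- chain in σ
        obtain ⟨g, hg⟩ : ∃ g : Fin c → Fin a, ∀ s, (g s).val = (f (Fin.castLE hcm s)).val := by
          refine ⟨fun s => ⟨(f (Fin.castLE hcm s)).val, ?_⟩, fun s => rfl⟩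
          rw [key]
          exact s.isLt
        refine ⟨g, ?_, ?_⟩
        · intro s1 s2 hs
          have : Fin.castLE hcm s1 < Fin.castLE hcm s2 := by
            rw [Fin.lt_def] at hs ⊢; exact hs
          have := hf this
          rw [Fin.lt_def] at this ⊢
          rw [hg, hg]
          exact this
        · intro s1 s2 hs
          have h12 : Fin.castLE hcm s1 < Fin.castLE hcm s2 := by
            rw [Fin.lt_def] at hs ⊢; exact hs
          have hlt := hfd _ _ h12
          have e1 := pglue_L' hab σ τ (f (Fin.castLE hcm s1)) (g s1) (hg s1).symm
          have e2 := pglue_L' hab σ τ (f (Fin.castLE hcm s2)) (g s2) (hg s2).symm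
          rw [Fin.lt_def] at hlt ⊢
          omega
      · -- chain in τ
        obtain ⟨F2, hF2⟩ : ∃ F2 : Fin (m-c) → Fin m, ∀ s, (F2 s).val = c + s.val :=
          ⟨fun s => ⟨c + s.val, by have := s.isLt; omega⟩, fun s => rfl⟩
        have hgt : ∀ s : Fin (m-c), a < (f (F2 s)).val := by
          intro s
          have h1 : ¬ ((f (F2 s)).val < a) := by
            rw [key, hF2]; omega
          have h2 := hM (F2 s)
          omega
        obtain ⟨g, hg⟩ : ∃ g : Fin (m-c) → Fin b, ∀ s, (f (F2 s)).val = a + 1 + (g s).val := by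
          refine ⟨fun s => ⟨(f (F2 s)).val - (a+1), by
            have := (f (F2 s)).isLt; have := hgt s; omega⟩, fun s => ?_⟩
          simp only [Fin.val_mk]
          have := hgt s
          omega
        refine ⟨g, ?_, ?_⟩
        · intro s1 s2 hs
          have h12 : F2 s1 < F2 s2 := by rw [Fin.lt_def, hF2, hF2]; rw [Fin.lt_def] at hs; omega
          have := hf h12
          rw [Fin.lt_def] at this ⊢
          have e1 := hg s1; have e2 := hg s2
          omega
        · intro s1 s2 hs
          have h12 : F2 s1 < F2 s2 := by rw [Fin.lt_def, hF2, hF2]; rw [Fin.lt_def] at hs; omega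
          have hlt := hfd _ _ h12
          have e1 := pglue_R' hab σ τ (f (F2 s1)) (g s1) (hg s1)
          have e2 := pglue_R' hab σ τ (f (F2 s2)) (g s2) (hg s2)
          rw [Fin.lt_def] at hlt ⊢
          omega
  · rintro (⟨c, d, hcd, ⟨g, hgm, hgd⟩, ⟨h, hhm, hhd⟩⟩ | ⟨hm, ⟨h, hhm, hhd⟩⟩)
    · -- combine: σ-chain (in L block) then τ-chain (in R block)
      obtain ⟨f, hfspec⟩ : ∃ f : Fin m → Fin n,
          ∀ t : Fin m, (∃ s : Fin c, s.val = t.val ∧ (f t).val = (g s).val) ∨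
            (∃ s : Fin d, c + s.val = t.val ∧ (f t).val = a + 1 + (h s).val) := by
        refine ⟨fun t => if ht : t.val < c
          then ⟨(g ⟨t.val, ht⟩).val, by have := (g ⟨t.val, ht⟩).isLt; omega⟩
          else ⟨a + 1 + (h ⟨t.val - c, by have := t.isLt; omega⟩).val, by
            have := (h ⟨t.val - c, by have := t.isLt; omega⟩).isLt; omega⟩, fun t => ?_⟩
        by_cases ht : t.val < c
        · exact Or.inl ⟨⟨t.val, ht⟩, rfl, by simp only [dif_pos ht]⟩
        · refine Or.inr ⟨⟨t.val - c, by have := t.isLt; omega⟩, by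
            simp only [Fin.val_mk]; omega, by simp only [dif_neg ht]⟩
      have hLa : ∀ s : Fin c, (g s).val < a := fun s => (g s).isLt
      refine ⟨f, ?_, ?_⟩
      · intro t1 t2 hlt
        rw [Fin.lt_def] at hlt ⊢
        rcases hfspec t1 with ⟨s1, hs1, e1⟩ | ⟨s1, hs1, e1⟩ <;>
          rcases hfspec t2 with ⟨s2, hs2, e2⟩ | ⟨s2, hs2, e2⟩
        · have : s1 < s2 := by rw [Fin.lt_def]; omega
          have := hgm this
          rw [Fin.lt_def] at this
          omega
        · have := (g s1).isLt
          omega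
        · have := s1.isLt; have := (h s1).isLt; have := s2.isLt
          omega
        · have : s1 < s2 := by rw [Fin.lt_def]; omega
          have := hhm this
          rw [Fin.lt_def] at this
          omega
      · intro t1 t2 hlt
        rw [Fin.lt_def] at hlt
        rcases hfspec t1 with ⟨s1, hs1, e1⟩ | ⟨s1, hs1, e1⟩ <;>
          rcases hfspec t2 with ⟨s2, hs2, e2⟩ | ⟨s2, hs2, e2⟩
        · have hlt' : s1 < s2 := by rw [Fin.lt_def]; omega
          have p1 := pglue_L' hab σ τ (f t1) (g s1) e1
          have p2 := pglue_L' hab σ τ (f t2) (g s2) e2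
          have := hgd s1 s2 hlt'
          rw [Fin.lt_def] at this ⊢
          omega
        · have p1 := pglue_L' hab σ τ (f t1) (g s1) e1
          have p2 := pglue_R' hab σ τ (f t2) (h s2) e2
          have := (h s2).isLt
          rw [Fin.lt_def]
          omega
        · exfalso; have := s1.isLt; omega
        · have hlt' : s1 < s2 := by rw [Fin.lt_def]; omega
          have p1 := pglue_R' hab σ τ (f t1) (h s1) e1
          have p2 := pglue_R' hab σ τ (f t2) (h s2) e2
          have := hhd s1 s2 hlt'
          rw [Fin.lt_def] at this ⊢
          omega
    · -- maximum first, then τ-chain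
      obtain ⟨f, hfspec⟩ : ∃ f : Fin m → Fin n,
          ∀ t : Fin m, (t.val = 0 ∧ (f t).val = a) ∨
            (∃ s : Fin (m-1), s.val + 1 = t.val ∧ (f t).val = a + 1 + (h s).val) := by
        refine ⟨fun t => if ht : t.val = 0 then ⟨a, by omega⟩
          else ⟨a + 1 + (h ⟨t.val - 1, by have := t.isLt; omega⟩).val, by
            have := (h ⟨t.val - 1, by have := t.isLt; omega⟩).isLt; omega⟩, fun t => ?_⟩
        by_cases ht : t.val = 0
        · exact Or.inl ⟨ht, by simp only [dif_pos ht]⟩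
        · refine Or.inr ⟨⟨t.val - 1, by have := t.isLt; omega⟩, by
            simp only [Fin.val_mk]; omega, by simp only [dif_neg ht]⟩
      refine ⟨f, ?_, ?_⟩
      · intro t1 t2 hlt
        rw [Fin.lt_def] at hlt ⊢
        rcases hfspec t1 with ⟨hs1, e1⟩ | ⟨s1, hs1, e1⟩ <;>
          rcases hfspec t2 with ⟨hs2, e2⟩ | ⟨s2, hs2, e2⟩
        · omega
        · omega
        · omega
        · have : s1 < s2 := by rw [Fin.lt_def]; omega
          have := hhm this
          rw [Fin.lt_def] at this
          omega
      · intro t1 t2 hlt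
        rw [Fin.lt_def] at hlt
        rcases hfspec t1 with ⟨hs1, e1⟩ | ⟨s1, hs1, e1⟩ <;>
          rcases hfspec t2 with ⟨hs2, e2⟩ | ⟨s2, hs2, e2⟩
        · omega
        · have p1 := pglue_M hab σ τ (f t1) e1
          have p2 := pglue_R' hab σ τ (f t2) (h s2) e2
          have := (h s2).isLt
          rw [Fin.lt_def]
          omega
        · omega
        · have hlt' : s1 < s2 := by rw [Fin.lt_def]; omega
          have p1 := pglue_R' hab σ τ (f t1) (h s1) e1
          have p2 := pglue_R' hab σ τ (f t2) (h s2) e2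
          have := hhd s1 s2 hlt'
          rw [Fin.lt_def] at this ⊢
          omega
open DyckStep in
/-- number of peaks of a list of Dyck steps -/
def pkS : List DyckStep → ℕ
  | [] => 0
  | [_] => 0
  | a :: b :: t => (if a = U ∧ b = D then 1 else 0) + pkS (b :: t)

/-- recursive version of numPeaks -/
def pkB : List Bool → ℕ
  | [] => 0
  | [_] => 0
  | a :: b :: t => (if a = true ∧ b = false then 1 else 0) + pkB (b :: t)

lemma numPeaks_eq_pkB (w : List Bool) : numPeaks w = pkB w := by
  induction w with
  | nil => rfl
  | cons a l ih =>
    cases l with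
    | nil => rfl
    | cons b t =>
      have : numPeaks (a :: b :: t) = (if (a, b) = (true, false) then 1 else 0)
          + numPeaks (b :: t) := by
        simp only [numPeaks, List.tail_cons, List.zip_cons_cons, List.count_cons]
        rw [add_comm]
        congr 1
        by_cases h : (a, b) = (true, false)
        · simp [h]
        · simp [h, Ne.symm h]
      rw [this, ih]
      show _ = (if a = true ∧ b = false then 1 else 0) + pkB (b :: t)
      congr 1
      cases a <;> cases b <;> simp

open DyckStep in
/-- the map from `Bool` to `DyckStep` -/
def b2s (b : Bool) : DyckStep := if b then U else D

lemma pkB_eq_pkS (w : List Bool) : pkS (w.map b2s) = pkB w := by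
  induction w with
  | nil => rfl
  | cons a l ih =>
    cases l with
    | nil => rfl
    | cons b t =>
      show (if b2s a = DyckStep.U ∧ b2s b = DyckStep.D then 1 else 0) + pkS ((b :: t).map b2s)
          = (if a = true ∧ b = false then 1 else 0) + pkB (b :: t)
      rw [ih]
      congr 1
      cases a <;> cases b <;> simp [b2s]

open DyckStep in
lemma pkS_append (x y : List DyckStep) :
    pkS (x ++ y) = pkS x + pkS y +
      (if x.getLast? = some U ∧ y.head? = some D then 1 else 0) := by
  induction x with
  | nil => simp [pkS]
  | cons a l ih =>
    cases l with
    | nil =>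
      cases y with
      | nil => simp [pkS]
      | cons c t =>
        show (if a = U ∧ c = D then 1 else 0) + pkS (c :: t) = _
        simp only [pkS, List.getLast?_singleton, List.head?_cons, Option.some.injEq]
        omega
    | cons b t =>
      show (if a = U ∧ b = D then 1 else 0) + pkS ((b :: t) ++ y) = _
      rw [ih]
      show _ = (if a = U ∧ b = D then 1 else 0) + pkS (b :: t) + pkS y + _
      rw [List.getLast?_cons_cons]
      omega

lemma semilength_eq_zero_iff (p : DyckWord) : p.semilength = 0 ↔ p = 0 := by
  constructor
  · intro h
    have := p.two_mul_semilength_eq_length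
    rw [h] at this
    have : p.toList = [] := List.length_eq_zero_iff.mp (by omega)
    exact DyckWord.toList_eq_nil.mp this
  · rintro rfl; rfl

open DyckStep in
lemma pkS_nest_add (a b : DyckWord) :
    pkS (a.nest + b).toList = (if a = 0 then 1 else pkS a.toList) + pkS b.toList := by
  have hlist : (a.nest + b).toList = ([U] ++ a.toList ++ [D]) ++ b.toList := rfl
  rw [hlist, pkS_append]
  have hlast : ([U] ++ a.toList ++ [D]).getLast? = some D := by
    rw [List.getLast?_concat]
  rw [hlast]
  simp only [Option.some.injEq, reduceCtorEq, false_and, if_false, add_zero]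
  congr 1
  by_cases ha : a = 0
  · subst ha
    simp [pkS, DyckWord.toList]
    rfl
  · rw [if_neg ha]
    have hne := DyckWord.toList_ne_nil.mpr ha
    rw [List.append_assoc, pkS_append]
    have h1 : pkS [U] = 0 := rfl
    have hh : (a.toList ++ [D]).head? = some U := by
      rw [List.head?_append_of_ne_nil _ hne]
      rw [List.head?_eq_head hne, DyckWord.head_eq_U a hne]
    rw [h1, hh]
    simp only [List.getLast?_singleton, Option.some.injEq, reduceCtorEq, and_false, if_false]
    rw [pkS_append]
    have hl : a.toList.getLast? = some D := by
      rw [List.getLast?_eq_getLast hne, DyckWord.getLast_eq_D a hne]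
    rw [hl]
    simp [pkS]

open DyckStep in
lemma pkS_pos (p : DyckWord) (hp : p ≠ 0) : 1 ≤ pkS p.toList := by
  have hdec := p.nest_insidePart_add_outsidePart hp
  rw [← hdec, pkS_nest_add]
  by_cases h : p.insidePart = 0
  · simp [h]
  · rw [if_neg h]
    have hlt := DyckWord.semilength_insidePart_lt hp
    have := pkS_pos p.insidePart h
    omega
termination_by p.semilength
decreasing_by exact DyckWord.semilength_insidePart_lt hp

/-- Dyck words of semilength `n` -/
abbrev DS (n : ℕ) := {p : DyckWord // p.semilength = n}

/-- 132-avoiding permutations of `Fin n` -/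
abbrev AvS (n : ℕ) := {π : Equiv.Perm (Fin n) // AvoidsPattern π pat132}

lemma DS_sigma_ext {n : ℕ} (x y : Σ i : Fin n, DS i.val × DS (n - 1 - i.val))
    (h0 : x.1.val = y.1.val) (h1 : x.2.1.val = y.2.1.val) (h2 : x.2.2.val = y.2.2.val) :
    x = y := by
  obtain ⟨⟨iv, hi⟩, ⟨a, ha⟩, ⟨b, hb⟩⟩ := x
  obtain ⟨⟨iv', hi'⟩, ⟨a', ha'⟩, ⟨b', hb'⟩⟩ := y
  simp only [Fin.val_mk] at h0 h1 h2
  subst h0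
  subst h1
  subst h2
  rfl

lemma DS_ne_zero {n : ℕ} (hn : 1 ≤ n) (p : DS n) : p.val ≠ 0 := by
  intro h
  have hp := p.prop
  rw [h] at hp
  simp only [DyckWord.semilength_zero] at hp
  omega

/-- first-return decomposition of Dyck words of semilength `n ≥ 1` -/
def dyckDecomp (n : ℕ) (hn : 1 ≤ n) : DS n ≃ Σ i : Fin n, DS i.val × DS (n - 1 - i.val) where
  toFun p :=
    ⟨⟨p.val.insidePart.semilength, by
        have hkey := DyckWord.semilength_insidePart_lt (DS_ne_zero hn p)
        have := p.prop; omega⟩,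
      ⟨p.val.insidePart, rfl⟩,
      ⟨p.val.outsidePart, by
        have hkey := DyckWord.semilength_insidePart_add_semilength_outsidePart_add_one
          (DS_ne_zero hn p)
        have := p.prop; simp only [Fin.val_mk]; omega⟩⟩
  invFun x := ⟨x.2.1.val.nest + x.2.2.val, by
    rw [DyckWord.semilength_add, DyckWord.semilength_nest, x.2.1.prop, x.2.2.prop]
    have := x.1.isLt
    omega⟩
  left_inv p := Subtype.ext (p.val.nest_insidePart_add_outsidePart (DS_ne_zero hn p))
  right_inv x := by
    have h1 : (x.2.1.val.nest + x.2.2.val).insidePart = x.2.1.val := by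
      rw [DyckWord.insidePart_add DyckWord.nest_ne_zero, DyckWord.insidePart_nest]
    have h2 : (x.2.1.val.nest + x.2.2.val).outsidePart = x.2.2.val := by
      rw [DyckWord.outsidePart_add DyckWord.nest_ne_zero, DyckWord.outsidePart_nest, zero_add]
    apply DS_sigma_ext
    · show (x.2.1.val.nest + x.2.2.val).insidePart.semilength = x.1.val
      rw [h1]
      exact x.2.1.prop
    · show (x.2.1.val.nest + x.2.2.val).insidePart = x.2.1.val
      exact h1
    · show (x.2.1.val.nest + x.2.2.val).outsidePart = x.2.2.val
      exact h2
section PermDecomp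

variable {n : ℕ}

/-- gluing map into `AvS n` -/
noncomputable def permGlue (n : ℕ) (x : Σ i : Fin n, AvS i.val × AvS (n - 1 - i.val)) : AvS n :=
  ⟨pglue (by have := x.1.isLt; omega) x.2.1.val x.2.2.val, by
    intro hc
    rw [contains132_pglue] at hc
    rcases hc with hc | hc
    · exact x.2.1.prop hc
    · exact x.2.2.prop hc⟩

lemma permGlue_inj (n : ℕ) : Function.Injective (permGlue n) := by
  intro x y hxy
  have hval := congrArg Subtype.val hxy
  simp only [permGlue] at hval
  obtain ⟨i, ⟨σ, hσ⟩, ⟨τ, hτ⟩⟩ := x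
  obtain ⟨i', ⟨σ', hσ'⟩, ⟨τ', hτ'⟩⟩ := y
  simp only at hval
  -- first, the indices agree
  have hivv : i = i' := by
    by_contra hne0
    have hne : i.val ≠ i'.val := fun h => hne0 (Fin.ext h)
    have e1 := pglue_M (show i.val + 1 + (n-1-i.val) = n by have := i.isLt; omega) σ τ i rfl
    have e2 : ((pglue (show i.val + 1 + (n-1-i.val) = n by have := i.isLt; omega) σ τ) i).val =
        ((pglue (show i'.val + 1 + (n-1-i'.val) = n by have := i'.isLt; omega) σ' τ') i).val := by
      rw [hval]
    have hin := i.isLt; have hin' := i'.isLt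
    rcases lt_trichotomy i.val i'.val with h | h | h
    · have := pglue_L_lb (show i'.val + 1 + (n-1-i'.val) = n by have := i'.isLt; omega) σ' τ' i h
      omega
    · exact hne h
    · have := pglue_R_ub (show i'.val + 1 + (n-1-i'.val) = n by have := i'.isLt; omega) σ' τ' i h
      omega
  subst hivv
  -- now the components agree
  have hσeq : σ = σ' := by
    apply Equiv.ext
    intro s
    have hsn : s.val < n := by have := s.isLt; have := i.isLt; omega
    have e2 : ((pglue (show i.val + 1 + (n-1-i.val) = n by have := i.isLt; omega) σ τ)
          ⟨s.val, hsn⟩).val =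
        ((pglue (show i.val + 1 + (n-1-i.val) = n by have := i.isLt; omega) σ' τ')
          ⟨s.val, hsn⟩).val := by
      rw [hval]
    have p1 := pglue_L' (show i.val + 1 + (n-1-i.val) = n by have := i.isLt; omega) σ τ
      ⟨s.val, hsn⟩ s rfl
    have p2 := pglue_L' (show i.val + 1 + (n-1-i.val) = n by have := i.isLt; omega) σ' τ'
      ⟨s.val, hsn⟩ s rfl
    ext
    omega
  subst hσeq
  have hτeq : τ = τ' := by
    apply Equiv.ext
    intro s
    have hsn : i.val + 1 + s.val < n := by have := s.isLt; omega
    have e2 : ((pglue (show i.val + 1 + (n-1-i.val) = n by have := i.isLt; omega) σ τ)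
          ⟨i.val + 1 + s.val, hsn⟩).val =
        ((pglue (show i.val + 1 + (n-1-i.val) = n by have := i.isLt; omega) σ τ')
          ⟨i.val + 1 + s.val, hsn⟩).val := by
      rw [hval]
    have p1 := pglue_R' (show i.val + 1 + (n-1-i.val) = n by have := i.isLt; omega) σ τ
      ⟨i.val + 1 + s.val, hsn⟩ s rfl
    have p2 := pglue_R' (show i.val + 1 + (n-1-i.val) = n by have := i.isLt; omega) σ τ'
      ⟨i.val + 1 + s.val, hsn⟩ s rfl
    ext
    omega
  subst hτeq
  rfl

lemma permGlue_surj (n : ℕ) (hn : 1 ≤ n) : Function.Surjective (permGlue n) := by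
  rintro ⟨π, hav⟩
  rw [AvoidsPattern, contains132_iff] at hav
  push_neg at hav
  set M : Fin n := π.symm ⟨n-1, by omega⟩ with hM
  have hπM : (π M).val = n - 1 := by rw [hM, Equiv.apply_symm_apply]
  set a := M.val with ha
  set b := n - 1 - a with hb
  have hab : a + 1 + b = n := by have := M.isLt; omega
  have hmaxval : ∀ x : Fin n, x ≠ M → (π x).val < n - 1 := by
    intro x hx
    have hne : π x ≠ π M := fun h => hx (π.injective h)
    have := (π x).isLt
    rw [Fin.ne_iff_vne, hπM] at hne
    omega
  -- key 1 :値 after M are smaller than values before M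
  have key1 : ∀ j k : Fin n, j < M → M < k → π k < π j := by
    intro j k hj hk
    by_contra hc
    have hne : π j ≠ π k := fun h => by
      have := π.injective h
      subst this
      exact absurd hj (by intro h2; exact absurd (h2.trans hk) (lt_irrefl _))
    have h1 : π j < π k := lt_of_le_of_ne (le_of_not_gt hc) hne
    have h2 : π k < π M := by
      rw [Fin.lt_def, hπM]
      exact hmaxval k (by intro h; rw [h] at hk; exact lt_irrefl _ hk)
    exact absurd h2 (not_lt.mpr (hav j M k hj hk h1))
  -- key 2 : values after M are < b
  have key2 : ∀ k : Fin n, M < k → (π k).val < b := by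
    intro k hk
    have himg : Finset.image π (Finset.Iic M) ⊆ Finset.Ioi (π k) := by
      intro v hv
      rw [Finset.mem_image] at hv
      obtain ⟨j, hj, rfl⟩ := hv
      rw [Finset.mem_Iic] at hj
      rw [Finset.mem_Ioi]
      rcases lt_or_eq_of_le hj with hj | hj
      · exact key1 j k hj hk
      · subst hj
        rw [Fin.lt_def, hπM]
        exact hmaxval k (by intro h; rw [h] at hk; exact lt_irrefl _ hk)
    have hcard := Finset.card_le_card himg
    rw [Finset.card_image_of_injective _ π.injective, Fin.card_Iic, Fin.card_Ioi] at hcard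
    omega
  -- key 3 : values before M are ≥ b
  have key3 : ∀ j : Fin n, j < M → b ≤ (π j).val := by
    intro j hj
    by_contra hc
    push_neg at hc
    have hbn : b < n := by omega
    have himg : Finset.image π (Finset.Ioi M) ⊆ Finset.Iio (⟨b, hbn⟩ : Fin n) := by
      intro v hv
      rw [Finset.mem_image] at hv
      obtain ⟨k, hk, rfl⟩ := hv
      rw [Finset.mem_Ioi] at hk
      rw [Finset.mem_Iio, Fin.lt_def]
      exact key2 k hk
    have hcards : (Finset.image π (Finset.Ioi M)).card = b := by
      rw [Finset.card_image_of_injective _ π.injective, Fin.card_Ioi]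
    have heq : Finset.image π (Finset.Ioi M) = Finset.Iio (⟨b, hbn⟩ : Fin n) := by
      apply Finset.eq_of_subset_of_card_le himg
      rw [Fin.card_Iio, hcards]
    have hmem : π j ∈ Finset.Iio (⟨b, hbn⟩ : Fin n) := by
      rw [Finset.mem_Iio, Fin.lt_def]
      exact hc
    rw [← heq, Finset.mem_image] at hmem
    obtain ⟨k, hk, hkj⟩ := hmem
    have := π.injective hkj
    subst this
    rw [Finset.mem_Ioi] at hk
    exact absurd (hj.trans hk) (lt_irrefl _)
  -- build σ
  obtain ⟨σ, hσspec⟩ : ∃ σ : Equiv.Perm (Fin a),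
      ∀ (s : Fin a) (x : Fin n), x.val = s.val → (σ s).val = (π x).val - b := by
    have hsin : ∀ s : Fin a, (π ⟨s.val, by have := s.isLt; omega⟩).val - b < a := by
      intro s
      have h1 := hmaxval ⟨s.val, by have := s.isLt; omega⟩
        (by rw [Fin.ne_iff_vne]; simp only [Fin.val_mk]; have := s.isLt; omega)
      have := s.isLt
      omega
    set sFun : Fin a → Fin a := fun s => ⟨(π ⟨s.val, by have := s.isLt; omega⟩).val - b,
      hsin s⟩ with hsFun
    have hinj : Function.Injective sFun := by
      intro s1 s2 h
      have h3 : ∀ s : Fin a, b ≤ (π ⟨s.val, by have := s.isLt; omega⟩).val := by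
        intro s
        apply key3
        rw [Fin.lt_def]
        simp only [Fin.val_mk]
        exact s.isLt
      have hv := congrArg Fin.val h
      simp only [hsFun, Fin.val_mk] at hv
      have := h3 s1
      have := h3 s2
      have : (π ⟨s1.val, by have := s1.isLt; omega⟩) = (π ⟨s2.val, by have := s2.isLt; omega⟩) := by
        ext; omega
      have := π.injective this
      have := congrArg Fin.val this
      ext
      simpa using this
    refine ⟨Equiv.ofBijective sFun ((Finite.injective_iff_bijective).mp hinj), ?_⟩
    intro s x hx
    have hxeq : x = ⟨s.val, by have := s.isLt; omega⟩ := Fin.ext hx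
    rw [hxeq]
    rfl
  -- build τ
  obtain ⟨τ, hτspec⟩ : ∃ τ : Equiv.Perm (Fin b),
      ∀ (s : Fin b) (x : Fin n), x.val = a + 1 + s.val → (τ s).val = (π x).val := by
    have htin : ∀ s : Fin b, (π ⟨a + 1 + s.val, by have := s.isLt; omega⟩).val < b := by
      intro s
      apply key2
      rw [Fin.lt_def]
      simp only [Fin.val_mk]
      omega
    set tFun : Fin b → Fin b := fun s => ⟨(π ⟨a + 1 + s.val, by have := s.isLt; omega⟩).val,
      htin s⟩ with htFun
    have hinj : Function.Injective tFun := by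
      intro s1 s2 h
      have hv := congrArg Fin.val h
      simp only [htFun, Fin.val_mk] at hv
      have : (π ⟨a + 1 + s1.val, by have := s1.isLt; omega⟩)
          = (π ⟨a + 1 + s2.val, by have := s2.isLt; omega⟩) := by ext; omega
      have := π.injective this
      have := congrArg Fin.val this
      ext
      simpa using this
    refine ⟨Equiv.ofBijective tFun ((Finite.injective_iff_bijective).mp hinj), ?_⟩
    intro s x hx
    have hxeq : x = ⟨a + 1 + s.val, by have := s.isLt; omega⟩ := Fin.ext hx
    rw [hxeq]
    rfl
  -- π equals the glued permutation
  have hπeq : pglue hab σ τ = π := by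
    apply Equiv.ext
    intro x
    apply Fin.ext
    rcases lt_trichotomy x.val a with h | h | h
    · rw [pglue_L' hab σ τ x ⟨x.val, h⟩ rfl, hσspec ⟨x.val, h⟩ x rfl]
      have hxM : x < M := by rw [Fin.lt_def]; exact h
      have h1 := key3 x hxM
      omega
    · have hxM : x = M := Fin.ext h
      rw [pglue_M hab σ τ x h, hxM, hπM]
      omega
    · rw [pglue_R' hab σ τ x ⟨x.val - (a+1), by have := x.isLt; omega⟩
        (by simp only [Fin.val_mk]; omega),
        hτspec ⟨x.val - (a+1), by have := x.isLt; omega⟩ x (by simp only [Fin.val_mk]; omega)]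
  -- assemble
  refine ⟨⟨⟨a, M.isLt⟩, ⟨σ, ?_⟩, ⟨τ, ?_⟩⟩, ?_⟩
  · intro hc
    have : ContainsPattern (pglue hab σ τ) pat132 := (contains132_pglue hab σ τ).mpr (Or.inl hc)
    rw [hπeq, contains132_iff] at this
    obtain ⟨i, j, k, h1, h2, h3, h4⟩ := this
    exact absurd h4 (not_lt.mpr (hav i j k h1 h2 h3))
  · intro hc
    have : ContainsPattern (pglue hab σ τ) pat132 := (contains132_pglue hab σ τ).mpr (Or.inr hc)
    rw [hπeq, contains132_iff] at this
    obtain ⟨i, j, k, h1, h2, h3, h4⟩ := this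
    exact absurd h4 (not_lt.mpr (hav i j k h1 h2 h3))
  · apply Subtype.ext
    show pglue _ σ τ = π
    exact hπeq

end PermDecomp
/-- the decomposition equivalence for 132-avoiding permutations -/
noncomputable def permDecompEquiv (n : ℕ) (hn : 1 ≤ n) :
    (Σ i : Fin n, AvS i.val × AvS (n - 1 - i.val)) ≃ AvS n :=
  Equiv.ofBijective (permGlue n) ⟨permGlue_inj n, permGlue_surj n hn⟩

/-- the master recursion: a statistic-preserving bijection between Dyck words of
semilength `n` and 132-avoiding permutations of `Fin n` -/
lemma master (n : ℕ) : ∃ e : DS n ≃ AvS n, ∀ (w : DS n) (m : ℕ),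
    DescSeq (e w).val m ↔ m ≤ pkS w.val.toList := by
  induction n using Nat.strong_induction_on with | _ n IH =>
  rcases Nat.eq_zero_or_pos n with hn | hn
  · subst hn
    have hav : AvoidsPattern (1 : Equiv.Perm (Fin 0)) pat132 := by
      rintro ⟨f, -, -⟩
      exact (f 0).elim0
    refine ⟨⟨fun _ => ⟨1, hav⟩, fun _ => ⟨0, rfl⟩, ?_, ?_⟩, ?_⟩
    · intro p
      exact Subtype.ext ((semilength_eq_zero_iff p.val).mp p.prop).symm
    · intro π
      exact Subtype.ext (Equiv.ext fun x => x.elim0)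
    · intro w m
      have hw : w.val = 0 := (semilength_eq_zero_iff _).mp w.prop
      have h0 : pkS w.val.toList = 0 := by rw [hw]; rfl
      rw [h0]
      constructor
      · rintro ⟨f, -, -⟩
        rcases Nat.eq_zero_or_pos m with hm | hm
        · omega
        · exact (f ⟨0, hm⟩).elim0
      · intro hm
        have : m = 0 := by omega
        subst this
        exact descSeq_zero _
  · choose E hE using IH
    have haux : ∀ i : Fin n, n - 1 - i.val < n := fun i => by omega
    refine ⟨(dyckDecomp n hn).trans
      ((Equiv.sigmaCongrRight
        (fun i => Equiv.prodCongr (E i.val i.isLt) (E (n - 1 - i.val) (haux i)))).trans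
        (permDecompEquiv n hn)), ?_⟩
    intro w m
    set d := dyckDecomp n hn w with hd
    have hiv := d.1.isLt
    have hab : d.1.val + 1 + (n - 1 - d.1.val) = n := by omega
    have hval : (((dyckDecomp n hn).trans
        ((Equiv.sigmaCongrRight
          (fun i => Equiv.prodCongr (E i.val i.isLt) (E (n - 1 - i.val) (haux i)))).trans
          (permDecompEquiv n hn))) w).val
        = pglue hab (E d.1.val d.1.isLt d.2.1).val
            (E (n - 1 - d.1.val) (haux d.1) d.2.2).val := rfl
    rw [hval, descSeq_pglue]
    have hw : w.val = d.2.1.val.nest + d.2.2.val := by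
      have h1 : (dyckDecomp n hn).symm d = w := by rw [hd]; exact Equiv.symm_apply_apply _ w
      have h2 : ((dyckDecomp n hn).symm d).val = d.2.1.val.nest + d.2.2.val := rfl
      rw [← h1, h2]
    have hpk : pkS w.val.toList
        = (if d.2.1.val = 0 then 1 else pkS d.2.1.val.toList) + pkS d.2.2.val.toList := by
      rw [hw, pkS_nest_add]
    have hE1 := fun c => hE d.1.val d.1.isLt d.2.1 c
    have hE2 := fun c => hE (n - 1 - d.1.val) (haux d.1) d.2.2 c
    by_cases h0 : d.2.1.val = 0
    · have hp1 : pkS d.2.1.val.toList = 0 := by rw [h0]; rfl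
      rw [hpk, if_pos h0]
      constructor
      · rintro (⟨c, dd, hcd, hc, hdd⟩ | ⟨hm, hdd⟩)
        · have := (hE1 c).mp hc
          have := (hE2 dd).mp hdd
          omega
        · have := (hE2 (m-1)).mp hdd
          omega
      · intro hm
        by_cases hc : m ≤ pkS d.2.2.val.toList
        · exact Or.inl ⟨0, m, by omega, (hE1 0).mpr (by omega), (hE2 m).mpr hc⟩
        · exact Or.inr ⟨by omega, (hE2 (m-1)).mpr (by omega)⟩
    · have hp1 : 1 ≤ pkS d.2.1.val.toList := pkS_pos _ h0
      rw [hpk, if_neg h0]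
      constructor
      · rintro (⟨c, dd, hcd, hc, hdd⟩ | ⟨hm, hdd⟩)
        · have := (hE1 c).mp hc
          have := (hE2 dd).mp hdd
          omega
        · have := (hE2 (m-1)).mp hdd
          omega
      · intro hm
        exact Or.inl ⟨min m (pkS d.2.1.val.toList), m - min m (pkS d.2.1.val.toList), by omega,
          (hE1 _).mpr (by omega), (hE2 _).mpr (by omega)⟩
open DyckStep in
/-- the map from `DyckStep` to `Bool` -/
def s2b (s : DyckStep) : Bool := match s with | U => true | D => false

lemma b2s_inj : Function.Injective b2s := by intro a b; cases a <;> cases b <;> simp [b2s]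

lemma s2b_inj : Function.Injective s2b := by intro a b; cases a <;> cases b <;> simp [s2b]

lemma s2b_b2s (b : Bool) : s2b (b2s b) = b := by cases b <;> rfl

lemma b2s_s2b (s : DyckStep) : b2s (s2b s) = s := by cases s <;> rfl

open DyckStep in
lemma count_map_b2s_U (w : List Bool) : (w.map b2s).count U = w.count true :=
  List.count_map_of_injective w b2s b2s_inj true

open DyckStep in
lemma count_map_b2s_D (w : List Bool) : (w.map b2s).count D = w.count false :=
  List.count_map_of_injective w b2s b2s_inj false

lemma count_map_s2b_true (l : List DyckStep) : (l.map s2b).count true = l.count DyckStep.U :=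
  List.count_map_of_injective l s2b s2b_inj DyckStep.U

lemma count_map_s2b_false (l : List DyckStep) : (l.map s2b).count false = l.count DyckStep.D :=
  List.count_map_of_injective l s2b s2b_inj DyckStep.D

/-- the equivalence between boolean Dyck words of semilength `n` and `DS n` -/
def boolDyckEquiv (n : ℕ) : {w : List Bool // IsDyckWord n w} ≃ DS n where
  toFun w :=
    ⟨⟨w.val.map b2s,
      by rw [count_map_b2s_U, count_map_b2s_D, w.prop.1, w.prop.2.1],
      fun i => by
        rw [← List.map_take, count_map_b2s_U, count_map_b2s_D]
        exact w.prop.2.2 i⟩,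
      by show (w.val.map b2s).count DyckStep.U = n; rw [count_map_b2s_U, w.prop.1]⟩
  invFun p :=
    ⟨p.val.toList.map s2b, by
      have h1 := p.val.count_U_eq_count_D
      have h2 : p.val.toList.count DyckStep.U = n := p.prop
      refine ⟨by rw [count_map_s2b_true, h2], by rw [count_map_s2b_false, ← h1, h2], fun i => by
        rw [← List.map_take, count_map_s2b_true, count_map_s2b_false]
        exact p.val.count_D_le_count_U i⟩⟩
  left_inv w := by
    apply Subtype.ext
    show (w.val.map b2s).map s2b = w.val
    rw [List.map_map]
    have : s2b ∘ b2s = id := funext s2b_b2s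
    rw [this, List.map_id]
  right_inv p := by
    apply Subtype.ext
    apply DyckWord.ext
    show (p.val.toList.map s2b).map b2s = p.val.toList
    rw [List.map_map]
    have : b2s ∘ s2b = id := funext b2s_s2b
    rw [this, List.map_id]

lemma numPeaks_toSteps (w : List Bool) : pkS (w.map b2s) = numPeaks w := by
  rw [pkB_eq_pkS, numPeaks_eq_pkB]

theorem atMostKPeaks_count_eq_avoiding_perm_count' (n k : ℕ) (hn : 1 ≤ n) (hk : 1 ≤ k) :
    Nat.card {w : List Bool // IsDyckWord n w ∧ numPeaks w ≤ k} =
      Nat.card {π : Equiv.Perm (Fin n) //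
        AvoidsPattern π pat132 ∧ AvoidsPattern π (patDesc k)} := by
  obtain ⟨e, he⟩ := master n
  apply Nat.card_congr
  refine ((Equiv.subtypeSubtypeEquivSubtypeInter _ _).symm.trans
    ((Equiv.subtypeEquiv (p := fun x => numPeaks x.val ≤ k)
        (q := fun y : DS n => pkS y.val.toList ≤ k) (boolDyckEquiv n) ?_).trans
      ((Equiv.subtypeEquiv (p := fun y : DS n => pkS y.val.toList ≤ k)
        (q := fun z : AvS n => AvoidsPattern z.val (patDesc k)) e ?_).trans
        (Equiv.subtypeSubtypeEquivSubtypeInter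
          (fun π : Equiv.Perm (Fin n) => AvoidsPattern π pat132)
          (fun π => AvoidsPattern π (patDesc k))))))
  · intro w
    show numPeaks w.val ≤ k ↔ pkS ((boolDyckEquiv n w).val.toList) ≤ k
    have : (boolDyckEquiv n w).val.toList = w.val.map b2s := rfl
    rw [this, numPeaks_toSteps]
  · intro w
    show pkS w.val.toList ≤ k ↔ AvoidsPattern (e w).val (patDesc k)
    rw [AvoidsPattern, containsPatDesc_iff, he w (k+1)]
    omega

/-- For all `n ≥ 1` and `k ≥ 1`, the number of Dyck words of semilength `n` with
at most `k` peaks equals the number of permutations of `{1, …, n}` avoiding the pattern 132 and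
the strictly decreasing pattern `(k+1)k⋯21` of length `k+1`. -/
theorem atMostKPeaks_count_eq_avoiding_perm_count (n k : ℕ) (hn : 1 ≤ n) (hk : 1 ≤ k) :
    Nat.card {w : List Bool // IsDyckWord n w ∧ numPeaks w ≤ k} =
      Nat.card {π : Equiv.Perm (Fin n) //
        AvoidsPattern π pat132 ∧ AvoidsPattern π (patDesc k)} := by
  exact atMostKPeaks_count_eq_avoiding_perm_count' n k hn hk
end

section
/- For every n ≥ 1, the number of permutations of {1,…,n} avoiding both patterns 132 and 321 equals 1 + n(n−1)/2. -/
def shiftFun (n s c : ℕ) (i : Fin n) : Fin n :=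
  if h : (i : ℕ) < c ∧ c ≤ n then ⟨((i : ℕ) + s) % c, lt_of_lt_of_le (Nat.mod_lt _ (by omega)) h.2⟩
  else i

def shiftPerm (n s t : ℕ) : Equiv.Perm (Fin n) where
  toFun := shiftFun n s (s + t)
  invFun := shiftFun n t (s + t)
  left_inv := by
    intro i
    unfold shiftFun
    by_cases h : (i : ℕ) < s + t ∧ s + t ≤ n
    · rw [dif_pos h, dif_pos ⟨Nat.mod_lt _ (by omega), h.2⟩]
      apply Fin.ext
      simp only
      rw [Nat.mod_add_mod]
      have e : (i : ℕ) + s + t = (i : ℕ) + 1 * (s + t) := by ring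
      rw [e, Nat.add_mul_mod_self_right, Nat.mod_eq_of_lt h.1]
    · rw [dif_neg h, dif_neg h]
  right_inv := by
    intro i
    unfold shiftFun
    by_cases h : (i : ℕ) < s + t ∧ s + t ≤ n
    · rw [dif_pos h, dif_pos ⟨Nat.mod_lt _ (by omega), h.2⟩]
      apply Fin.ext
      simp only
      rw [Nat.mod_add_mod]
      have e : (i : ℕ) + t + s = (i : ℕ) + 1 * (s + t) := by ring
      rw [e, Nat.add_mul_mod_self_right, Nat.mod_eq_of_lt h.1]
    · rw [dif_neg h, dif_neg h]

lemma shiftPerm_val (n m k : ℕ) (h : m + k ≤ n) (i : Fin n) :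
    ((shiftPerm n m k i : Fin n) : ℕ) =
      if (i : ℕ) < k then m + i else if (i : ℕ) < m + k then (i : ℕ) - k else i := by
  show ((shiftFun n m (m + k) i : Fin n) : ℕ) = _
  unfold shiftFun
  by_cases hc : (i : ℕ) < m + k ∧ m + k ≤ n
  · rw [dif_pos hc]
    simp only
    by_cases hik : (i : ℕ) < k
    · rw [if_pos hik, Nat.mod_eq_of_lt (by omega)]; omega
    · rw [if_neg hik, if_pos hc.1]
      have : (i : ℕ) + m = ((i:ℕ) - k) + 1 * (m + k) := by omega
      rw [this, Nat.add_mul_mod_self_right, Nat.mod_eq_of_lt (by omega)]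
  · rw [dif_neg hc]
    have : ¬ (i : ℕ) < m + k := by omega
    rw [if_neg (by omega), if_neg this]

lemma contains132 {n : ℕ} (π : Equiv.Perm (Fin n)) (i1 i2 i3 : Fin n)
    (h12 : i1 < i2) (h23 : i2 < i3) (hv1 : π i1 < π i3) (hv2 : π i3 < π i2) :
    ContainsPattern π pat132 := by
  refine ⟨![i1, i2, i3], ?_, ?_⟩
  · intro a b hab
    fin_cases a <;> fin_cases b <;>
      first
        | exact absurd hab (by decide)
        | exact h12
        | exact h23
        | exact h12.trans h23
  · intro a b
    fin_cases a <;> fin_cases b <;>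
      first
        | exact iff_of_true hv1 (by decide)
        | exact iff_of_true hv2 (by decide)
        | exact iff_of_true (hv1.trans hv2) (by decide)
        | exact iff_of_false (lt_irrefl _) (by decide)
        | exact iff_of_false (lt_asymm hv1) (by decide)
        | exact iff_of_false (lt_asymm hv2) (by decide)
        | exact iff_of_false (lt_asymm (hv1.trans hv2)) (by decide)

lemma contains321 {n : ℕ} (π : Equiv.Perm (Fin n)) (i1 i2 i3 : Fin n)
    (h12 : i1 < i2) (h23 : i2 < i3) (hv1 : π i2 < π i1) (hv2 : π i3 < π i2) :
    ContainsPattern π pat321 := by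
  refine ⟨![i1, i2, i3], ?_, ?_⟩
  · intro a b hab
    fin_cases a <;> fin_cases b <;>
      first
        | exact absurd hab (by decide)
        | exact h12
        | exact h23
        | exact h12.trans h23
  · intro a b
    fin_cases a <;> fin_cases b <;>
      first
        | exact iff_of_true hv1 (by decide)
        | exact iff_of_true hv2 (by decide)
        | exact iff_of_true (hv2.trans hv1) (by decide)
        | exact iff_of_false (lt_irrefl _) (by decide)
        | exact iff_of_false (lt_asymm hv1) (by decide)
        | exact iff_of_false (lt_asymm hv2) (by decide)
        | exact iff_of_false (lt_asymm (hv2.trans hv1)) (by decide)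

lemma perm_mono_eq_one {n : ℕ} (π : Equiv.Perm (Fin n))
    (h : ∀ i j : Fin n, i < j → π i < π j) : π = 1 := by
  have hsymm : ∀ i j : Fin n, i < j → π.symm i < π.symm j := by
    intro i j hij
    rcases lt_trichotomy (π.symm i) (π.symm j) with h' | h' | h'
    · exact h'
    · exact absurd (π.symm.injective (Fin.ext (congrArg Fin.val h'))) (by
        intro e; rw [e] at hij; exact lt_irrefl _ hij)
    · have := h _ _ h'
      rw [Equiv.apply_symm_apply, Equiv.apply_symm_apply] at this
      exact absurd hij (not_lt.2 (le_of_lt this))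
  have key : ∀ (f : Equiv.Perm (Fin n)), (∀ i j : Fin n, i < j → f i < f j) →
      ∀ i : Fin n, (i : ℕ) ≤ (f i : ℕ) := by
    intro f hf
    have : ∀ N : ℕ, ∀ i : Fin n, (i : ℕ) ≤ N → (i : ℕ) ≤ (f i : ℕ) := by
      intro N
      induction N with
      | zero => intro i h0; omega
      | succ N ih =>
        intro i hiN
        by_cases hi : (i : ℕ) ≤ N
        · exact ih i hi
        · have hval : (i : ℕ) = N + 1 := by omega
          have hNn : N < n := by omega
          have hj : (⟨N, hNn⟩ : Fin n) < i := by
            rw [Fin.lt_def]; simp only [Fin.val_mk]; omega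
          have h1 := hf _ _ hj
          have h2 := ih ⟨N, hNn⟩ (by simp)
          rw [Fin.lt_def] at h1
          simp only [Fin.val_mk] at h1 h2
          omega
    exact fun i => this (i : ℕ) i (le_refl _)
  apply Equiv.ext
  intro i
  have h1 := key π h i
  have h2 := key π.symm hsymm (π i)
  rw [Equiv.symm_apply_apply] at h2
  exact Fin.ext (by simp only [Equiv.Perm.one_apply]; omega)


lemma classify {n : ℕ} (π : Equiv.Perm (Fin n))
    (h132 : AvoidsPattern π pat132) (h321 : AvoidsPattern π pat321) :
    π = 1 ∨ ∃ m k : ℕ, 0 < m ∧ 0 < k ∧ m + k ≤ n ∧ π = shiftPerm n m k := by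
  by_cases hmono : ∀ i j : Fin n, i < j → π i < π j
  · exact Or.inl (perm_mono_eq_one π hmono)
  right
  push_neg at hmono
  obtain ⟨i0, j0, hij0, hnlt0⟩ := hmono
  have npos : 0 < n := i0.pos
  set z : Fin n := ⟨0, npos⟩ with hzdef
  have hzv : (z : ℕ) = 0 := rfl
  have hflip : ∀ i j : Fin n, i ≠ j → ¬ π i < π j → π j < π i := by
    intro i j hne hnl
    rcases lt_trichotomy (π i) (π j) with h | h | h
    · exact absurd h hnl
    · exact absurd (π.injective h) hne
    · exact h
  have _dummy : True := trivial
  have hd0 : π j0 < π i0 := lt_of_le_of_ne hnlt0 (fun e => (ne_of_lt hij0) (π.injective e).symm)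
  -- m := value at position 0 is positive
  have hm : 0 < ((π z : Fin n) : ℕ) := by
    by_contra hm0
    push_neg at hm0
    rcases eq_or_lt_of_le (show (z : ℕ) ≤ (i0 : ℕ) by omega) with he | hlt
    · have : z = i0 := Fin.ext he
      rw [← this] at hd0
      rw [Fin.lt_def] at hd0
      omega
    · have hzi : z < i0 := Fin.lt_def.mpr hlt
      have hj0z : j0 ≠ z := by
        intro e
        rw [e] at hij0
        rw [Fin.lt_def] at hij0 hzi
        omega
      have hπzj : π z < π j0 := by
        rw [Fin.lt_def]
        have : π j0 ≠ π z := fun e => hj0z (π.injective e)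
        rw [Ne, Fin.ext_iff] at this
        omega
      exact h132 (contains132 π z i0 j0 hzi hij0 hπzj hd0)
  set kF : Fin n := π.symm z with hkFdef
  have hπk : π kF = z := π.apply_symm_apply z
  have hk : 0 < (kF : ℕ) := by
    by_contra h0
    push_neg at h0
    have : kF = z := Fin.ext (by omega)
    rw [this] at hπk
    rw [Fin.ext_iff] at hπk
    omega
  -- increasing on positions ≥ kF
  have hC2 : ∀ i j : Fin n, (kF : ℕ) ≤ (i : ℕ) → i < j → π i < π j := by
    intro i j hki hij
    by_contra hnl
    have hd : π j < π i := hflip i j (ne_of_lt hij) hnl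
    rcases eq_or_lt_of_le hki with he | hlt
    · have : kF = i := Fin.ext he
      rw [← this, hπk] at hd
      rw [Fin.lt_def] at hd
      omega
    · have hjk : j ≠ kF := by
        rw [Fin.lt_def] at hij
        intro e; rw [e] at hij; omega
      have hjz : j ≠ z := by
        rw [Fin.lt_def] at hij
        intro e; rw [e] at hij; omega
      have hzi : z < i := Fin.lt_def.mpr (by omega)
      have hzj : z < j := Fin.lt_def.mpr (by rw [Fin.lt_def] at hij; omega)
      rcases lt_trichotomy ((π j : Fin n) : ℕ) ((π z : Fin n) : ℕ) with h1 | h1 | h1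
      · rcases lt_trichotomy ((π i : Fin n) : ℕ) ((π z : Fin n) : ℕ) with h2 | h2 | h2
        · exact h321 (contains321 π z i j hzi hij (Fin.lt_def.mpr h2) hd)
        · exact absurd (π.injective (Fin.ext h2)) (by
            intro e; rw [e, Fin.lt_def] at hzi; omega)
        · have hπkj : π kF < π j := by
            rw [hπk, Fin.lt_def]
            have : π j ≠ π kF := fun e => hjk (π.injective e)
            rw [hπk, Ne, Fin.ext_iff] at this
            omega
          exact h132 (contains132 π kF i j hlt hij hπkj hd)
      · exact absurd (π.injective (Fin.ext h1)) (by
          intro e; rw [e, Fin.lt_def] at hzj; omega)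
      · exact h132 (contains132 π z i j hzi hij (Fin.lt_def.mpr h1) hd)
  -- increasing on positions < kF
  have hC1 : ∀ i j : Fin n, i < j → j < kF → π i < π j := by
    intro i j hij hjk
    by_contra hnl
    have hd : π j < π i := hflip i j (ne_of_lt hij) hnl
    have hπkj : π kF < π j := by
      rw [hπk, Fin.lt_def]
      have : π j ≠ π kF := fun e => (ne_of_lt hjk) (π.injective e)
      rw [hπk, Ne, Fin.ext_iff] at this
      omega
    exact h321 (contains321 π i j kF hij hjk hd hπkj)
  have hmn : ((π z : Fin n) : ℕ) < n := (π z).isLt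
  -- lower bound on initial block
  have C3 : ∀ i : Fin n, (i : ℕ) < (kF : ℕ) → ((π z : Fin n) : ℕ) + (i : ℕ) ≤ ((π i : Fin n) : ℕ) := by
    have : ∀ N : ℕ, ∀ i : Fin n, (i : ℕ) ≤ N → (i : ℕ) < (kF : ℕ) →
        ((π z : Fin n) : ℕ) + (i : ℕ) ≤ ((π i : Fin n) : ℕ) := by
      intro N
      induction N with
      | zero =>
        intro i hi0 _
        have : i = z := Fin.ext (by omega)
        rw [this]; omega
      | succ N ih =>
        intro i hiN hik
        by_cases hi : (i : ℕ) ≤ N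
        · exact ih i hi hik
        · have hval : (i : ℕ) = N + 1 := by omega
          have hNn : N < n := by have := i.isLt; omega
          have hji : (⟨N, hNn⟩ : Fin n) < i := Fin.lt_def.mpr (by simp; omega)
          have h1 := hC1 ⟨N, hNn⟩ i hji (Fin.lt_def.mpr (by simp; omega))
          have h2 := ih ⟨N, hNn⟩ (by simp) (by simp; omega)
          rw [Fin.lt_def] at h1
          simp only [Fin.val_mk] at h1 h2
          omega
    exact fun i hik => this (i : ℕ) i le_rfl hik
  -- the middle block
  have C4 : ∀ t : ℕ, t < ((π z : Fin n) : ℕ) →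
      ∃ h : (kF : ℕ) + t < n, ((π ⟨(kF : ℕ) + t, h⟩ : Fin n) : ℕ) = t := by
    intro t
    induction t using Nat.strong_induction_on with
    | _ t IH =>
      intro htm
      have htn : t < n := lt_trans htm hmn
      set p : Fin n := π.symm ⟨t, htn⟩ with hpdef
      have hπp : π p = ⟨t, htn⟩ := π.apply_symm_apply _
      have hpv : ((π p : Fin n) : ℕ) = t := by rw [hπp]
      have hpk : (kF : ℕ) ≤ (p : ℕ) := by
        by_contra h'
        push_neg at h'
        have := C3 p h'
        omega
      have hne : ∀ s : ℕ, s < t → (p : ℕ) ≠ (kF : ℕ) + s := by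
        intro s hst e
        obtain ⟨hs, hval⟩ := IH s hst (lt_trans hst htm)
        have hpe : p = ⟨(kF : ℕ) + s, hs⟩ := Fin.ext e
        rw [hpe] at hpv
        omega
      have hpt : (kF : ℕ) + t ≤ (p : ℕ) := by
        by_contra h'
        push_neg at h'
        exact hne ((p : ℕ) - (kF : ℕ)) (by omega) (by omega)
      have hbound : (kF : ℕ) + t < n := lt_of_le_of_lt hpt p.isLt
      refine ⟨hbound, ?_⟩
      by_cases he : (p : ℕ) = (kF : ℕ) + t
      · have hpe : (⟨(kF : ℕ) + t, hbound⟩ : Fin n) = p := Fin.ext he.symm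
        rw [hpe, hpv]
      · exfalso
        have hgt : (kF : ℕ) + t < (p : ℕ) := by omega
        rcases Nat.eq_zero_or_pos t with rfl | htpos
        · have : p = kF := rfl
          rw [this] at hgt
          omega
        · obtain ⟨hs1, hval1⟩ := IH (t - 1) (by omega) (by omega)
          have hq1 : π ⟨(kF : ℕ) + (t - 1), hs1⟩ < π ⟨(kF : ℕ) + t, hbound⟩ :=
            hC2 _ _ (by simp) (Fin.lt_def.mpr (by simp; omega))
          have hq2 : π ⟨(kF : ℕ) + t, hbound⟩ < π p :=
            hC2 _ _ (by simp) (Fin.lt_def.mpr (by simp; omega))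
          rw [Fin.lt_def] at hq1 hq2
          omega
  have hkm : (kF : ℕ) + ((π z : Fin n) : ℕ) ≤ n := by
    obtain ⟨h, _⟩ := C4 (((π z : Fin n) : ℕ) - 1) (by omega)
    omega
  -- values at tail positions are large
  have C5a : ∀ j : Fin n, (kF : ℕ) + ((π z : Fin n) : ℕ) ≤ (j : ℕ) →
      ((π z : Fin n) : ℕ) + (kF : ℕ) ≤ ((π j : Fin n) : ℕ) := by
    intro j hj
    have hjz : j ≠ z := by intro e; rw [e] at hj; rw [hzv] at hj; omega
    have h1 : ((π z : Fin n) : ℕ) ≤ ((π j : Fin n) : ℕ) := by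
      rcases Nat.lt_or_ge ((π j : Fin n) : ℕ) ((π z : Fin n) : ℕ) with h' | h'
      · exfalso
        obtain ⟨hb, hv⟩ := C4 ((π j : Fin n) : ℕ) h'
        have : π ⟨(kF : ℕ) + ((π j : Fin n) : ℕ), hb⟩ = π j := Fin.ext (by rw [hv])
        have he := π.injective this
        rw [Fin.ext_iff] at he
        simp only [Fin.val_mk] at he
        omega
      · exact h'
    have h2 : ((π j : Fin n) : ℕ) ≠ ((π z : Fin n) : ℕ) := by
      intro e
      exact hjz (π.injective (Fin.ext e))
    by_contra h3
    push_neg at h3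
    rcases Nat.lt_or_ge ((kF : ℕ)) 2 with hk1 | hk2
    · omega
    · have hqn : (kF : ℕ) - 1 < n := by have := kF.isLt; omega
      have hq := C3 ⟨(kF : ℕ) - 1, hqn⟩ (by simp; omega)
      simp only [Fin.val_mk] at hq
      have hzq : z < (⟨(kF : ℕ) - 1, hqn⟩ : Fin n) := Fin.lt_def.mpr (by simp; omega)
      have hqj : (⟨(kF : ℕ) - 1, hqn⟩ : Fin n) < j := Fin.lt_def.mpr (by simp; omega)
      have hπzj : π z < π j := Fin.lt_def.mpr (by omega)
      have hqjne : (⟨(kF : ℕ) - 1, hqn⟩ : Fin n) ≠ j := ne_of_lt hqj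
      have hπne : ((π j : Fin n) : ℕ) ≠ ((π ⟨(kF : ℕ) - 1, hqn⟩ : Fin n) : ℕ) := by
        intro e
        exact hqjne (π.injective (Fin.ext e.symm))
      have hπjq : π j < π ⟨(kF : ℕ) - 1, hqn⟩ := Fin.lt_def.mpr (by omega)
      exact h132 (contains132 π z ⟨(kF : ℕ) - 1, hqn⟩ j hzq hqj hπzj hπjq)
  -- lower bound on tail
  have low5 : ∀ j : Fin n, (kF : ℕ) + ((π z : Fin n) : ℕ) ≤ (j : ℕ) → (j : ℕ) ≤ ((π j : Fin n) : ℕ) := by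
    have : ∀ N : ℕ, ∀ j : Fin n, (j : ℕ) ≤ N → (kF : ℕ) + ((π z : Fin n) : ℕ) ≤ (j : ℕ) →
        (j : ℕ) ≤ ((π j : Fin n) : ℕ) := by
      intro N
      induction N with
      | zero => intro j h1 h2; omega
      | succ N ih =>
        intro j h1 h2
        by_cases hj : (j : ℕ) ≤ N
        · exact ih j hj h2
        · rcases eq_or_lt_of_le h2 with he | hlt
          · have := C5a j h2
            omega
          · have hjn : (j : ℕ) - 1 < n := by have := j.isLt; omega
            have hprev := ih ⟨(j : ℕ) - 1, hjn⟩ (by simp; omega) (by simp; omega)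
            have hstep := hC2 ⟨(j : ℕ) - 1, hjn⟩ j (by simp; omega) (Fin.lt_def.mpr (by simp; omega))
            rw [Fin.lt_def] at hstep
            simp only [Fin.val_mk] at hprev hstep
            omega
    exact fun j hj => this (j : ℕ) j le_rfl hj
  -- tail is identity
  have C5 : ∀ j : Fin n, (kF : ℕ) + ((π z : Fin n) : ℕ) ≤ (j : ℕ) → ((π j : Fin n) : ℕ) = (j : ℕ) := by
    have down : ∀ D : ℕ, ∀ j : Fin n, (kF : ℕ) + ((π z : Fin n) : ℕ) ≤ (j : ℕ) →
        n - (j : ℕ) ≤ D + 1 → ((π j : Fin n) : ℕ) = (j : ℕ) := by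
      intro D
      induction D with
      | zero =>
        intro j h1 h2
        have := low5 j h1
        have := (π j).isLt
        have := j.isLt
        omega
      | succ D ih =>
        intro j h1 h2
        by_cases hD : n - (j : ℕ) ≤ D + 1
        · exact ih j h1 hD
        · have hjn : (j : ℕ) + 1 < n := by omega
          have hnext := ih ⟨(j : ℕ) + 1, hjn⟩ (by simp only [Fin.val_mk]; omega)
            (by simp only [Fin.val_mk]; omega)
          have hstep := hC2 j ⟨(j : ℕ) + 1, hjn⟩ (by omega)
            (Fin.lt_def.mpr (by simp only [Fin.val_mk]; omega))
          have := low5 j h1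
          rw [Fin.lt_def] at hstep
          simp only [Fin.val_mk] at hnext hstep
          omega
    exact fun j hj => down n j hj (by omega)
  -- initial block is shift
  have upper6 : ∀ i : Fin n, (i : ℕ) < (kF : ℕ) → ((π i : Fin n) : ℕ) < ((π z : Fin n) : ℕ) + (kF : ℕ) := by
    intro i hik
    by_contra h'
    push_neg at h'
    have hvn : ((π i : Fin n) : ℕ) < n := (π i).isLt
    have := C5 ⟨((π i : Fin n) : ℕ), hvn⟩ (by simp; omega)
    simp only [Fin.val_mk] at this
    have he : π ⟨((π i : Fin n) : ℕ), hvn⟩ = π i := Fin.ext (by rw [this])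
    have := π.injective he
    rw [Fin.ext_iff] at this
    simp only [Fin.val_mk] at this
    omega
  have C6 : ∀ i : Fin n, (i : ℕ) < (kF : ℕ) → ((π i : Fin n) : ℕ) = ((π z : Fin n) : ℕ) + (i : ℕ) := by
    have down : ∀ D : ℕ, ∀ i : Fin n, (i : ℕ) < (kF : ℕ) →
        (kF : ℕ) - (i : ℕ) ≤ D + 1 → ((π i : Fin n) : ℕ) = ((π z : Fin n) : ℕ) + (i : ℕ) := by
      intro D
      induction D with
      | zero =>
        intro i h1 h2
        have := C3 i h1
        have := upper6 i h1
        omega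
      | succ D ih =>
        intro i h1 h2
        by_cases hD : (kF : ℕ) - (i : ℕ) ≤ D + 1
        · exact ih i h1 hD
        · have hin : (i : ℕ) + 1 < n := by have := kF.isLt; omega
          have hnext := ih ⟨(i : ℕ) + 1, hin⟩ (by simp; omega) (by simp; omega)
          have hstep := hC1 i ⟨(i : ℕ) + 1, hin⟩ (Fin.lt_def.mpr (by simp)) (Fin.lt_def.mpr (by simp; omega))
          have := C3 i h1
          rw [Fin.lt_def] at hstep
          simp only [Fin.val_mk] at hnext hstep
          omega
    exact fun i hi => down (kF : ℕ) i hi (by omega)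
  refine ⟨((π z : Fin n) : ℕ), (kF : ℕ), hm, hk, by omega, ?_⟩
  apply Equiv.ext
  intro i
  apply Fin.ext
  rw [shiftPerm_val n _ _ (by omega) i]
  by_cases h1 : (i : ℕ) < (kF : ℕ)
  · rw [if_pos h1]
    exact C6 i h1
  · rw [if_neg h1]
    by_cases h2 : (i : ℕ) < ((π z : Fin n) : ℕ) + (kF : ℕ)
    · rw [if_pos h2]
      obtain ⟨hb, hv⟩ := C4 ((i : ℕ) - (kF : ℕ)) (by omega)
      have he : (⟨(kF : ℕ) + ((i : ℕ) - (kF : ℕ)), hb⟩ : Fin n) = i := Fin.ext (by simp; omega)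
      conv_lhs => rw [← he]
      rw [hv]
    · rw [if_neg h2]
      exact C5 i (by omega)

lemma one_avoids132 {n : ℕ} : AvoidsPattern (1 : Equiv.Perm (Fin n)) pat132 := by
  rintro ⟨f, hf, hiff⟩
  have h : f 2 < f 1 := (hiff 2 1).mpr (by decide)
  exact absurd (hf (show (1 : Fin 3) < 2 by decide)) (not_lt.2 h.le)

lemma one_avoids321 {n : ℕ} : AvoidsPattern (1 : Equiv.Perm (Fin n)) pat321 := by
  rintro ⟨f, hf, hiff⟩
  have h : f 1 < f 0 := (hiff 1 0).mpr (by decide)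
  exact absurd (hf (show (0 : Fin 3) < 1 by decide)) (not_lt.2 h.le)

lemma shift_descent (n m k : ℕ) (h : m + k ≤ n) {i j : Fin n} (hij : i < j)
    (hd : shiftPerm n m k j < shiftPerm n m k i) :
    (i : ℕ) < k ∧ k ≤ (j : ℕ) ∧ (j : ℕ) < m + k := by
  have vi := shiftPerm_val n m k h i
  have vj := shiftPerm_val n m k h j
  rw [Fin.lt_def] at hij hd
  split_ifs at vi vj <;> omega

lemma shift_avoids132 {n m k : ℕ} (h : m + k ≤ n) :
    AvoidsPattern (shiftPerm n m k) pat132 := by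
  rintro ⟨f, hf, hiff⟩
  have h01 : f 0 < f 1 := hf (by decide)
  have h12 : f 1 < f 2 := hf (by decide)
  have hv1 : shiftPerm n m k (f 0) < shiftPerm n m k (f 2) := (hiff 0 2).mpr (by decide)
  have hv2 : shiftPerm n m k (f 2) < shiftPerm n m k (f 1) := (hiff 2 1).mpr (by decide)
  obtain ⟨hA, hB, hC⟩ := shift_descent n m k h h12 hv2
  have v0 := shiftPerm_val n m k h (f 0)
  have v2 := shiftPerm_val n m k h (f 2)
  rw [Fin.lt_def] at hv1 h01
  rw [if_pos (by omega)] at v0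
  rw [if_neg (by omega), if_pos hC] at v2
  omega

lemma shift_avoids321 {n m k : ℕ} (h : m + k ≤ n) :
    AvoidsPattern (shiftPerm n m k) pat321 := by
  rintro ⟨f, hf, hiff⟩
  have h01 : f 0 < f 1 := hf (by decide)
  have h12 : f 1 < f 2 := hf (by decide)
  have hv1 : shiftPerm n m k (f 1) < shiftPerm n m k (f 0) := (hiff 1 0).mpr (by decide)
  have hv2 : shiftPerm n m k (f 2) < shiftPerm n m k (f 1) := (hiff 2 1).mpr (by decide)
  obtain ⟨hA1, hB1, hC1⟩ := shift_descent n m k h h01 hv1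
  obtain ⟨hA2, hB2, hC2⟩ := shift_descent n m k h h12 hv2
  omega

lemma countI (n : ℕ) :
    ((Finset.range n).biUnion
        (fun a => (Finset.Icc 1 (n - 1 - a)).image (fun k => (a + 1, k)))).card
      = n * (n - 1) / 2 := by
  rw [Finset.card_biUnion]
  · have : ∀ a ∈ Finset.range n,
        ((Finset.Icc 1 (n - 1 - a)).image (fun k => (a + 1, k))).card = n - 1 - a := by
      intro a _
      rw [Finset.card_image_of_injective _ (fun x y e => (Prod.mk.injEq _ _ _ _).mp e |>.2),
        Nat.card_Icc]
      omega
    rw [Finset.sum_congr rfl this]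
    have := Finset.sum_range_reflect (fun i => i) n
    calc ∑ a ∈ Finset.range n, (n - 1 - a) = ∑ a ∈ Finset.range n, a := by
          rw [← Finset.sum_range_reflect (fun i => i) n]
      _ = n * (n - 1) / 2 := Finset.sum_range_id n
  · intro x _ y _ hxy
    simp only [Finset.disjoint_left, Finset.mem_image]
    rintro p ⟨k1, _, rfl⟩ ⟨k2, _, he⟩
    rw [Prod.mk.injEq] at he
    omega

lemma memI (n : ℕ) (p : ℕ × ℕ) :
    p ∈ (Finset.range n).biUnion
        (fun a => (Finset.Icc 1 (n - 1 - a)).image (fun k => (a + 1, k)))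
      ↔ 0 < p.1 ∧ 0 < p.2 ∧ p.1 + p.2 ≤ n := by
  simp only [Finset.mem_biUnion, Finset.mem_image, Finset.mem_range, Finset.mem_Icc]
  obtain ⟨p1, p2⟩ := p
  simp only [Prod.mk.injEq]
  constructor
  · rintro ⟨a, ha, k, ⟨hk1, hk2⟩, rfl, rfl⟩
    omega
  · rintro ⟨h1, h2, h3⟩
    exact ⟨p1 - 1, by omega, p2, ⟨by omega, by omega⟩, by omega, rfl⟩

/-- For every `n ≥ 1`, the number of permutations of `{1, …, n}` avoiding both
132 and 321 equals `1 + n(n-1)/2`. -/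
theorem avoid_132_321_count (n : ℕ) (hn : 1 ≤ n) :
    Nat.card {π : Equiv.Perm (Fin n) //
        AvoidsPattern π pat132 ∧ AvoidsPattern π pat321} = 1 + n * (n - 1) / 2 := by
  have npos : 0 < n := hn
  set I := (Finset.range n).biUnion
      (fun a => (Finset.Icc 1 (n - 1 - a)).image (fun k => (a + 1, k))) with hIdef
  have hmemI : ∀ p : ℕ × ℕ, p ∈ I ↔ 0 < p.1 ∧ 0 < p.2 ∧ p.1 + p.2 ≤ n := fun p => memI n p
  have hset : {π : Equiv.Perm (Fin n) | AvoidsPattern π pat132 ∧ AvoidsPattern π pat321}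
      = insert 1 ((fun p : ℕ × ℕ => shiftPerm n p.1 p.2) '' ↑I) := by
    ext π
    simp only [Set.mem_setOf_eq, Set.mem_insert_iff, Set.mem_image, Finset.mem_coe, hmemI]
    constructor
    · rintro ⟨a1, a2⟩
      rcases classify π a1 a2 with h | ⟨m, k, hm, hk, hmk, he⟩
      · exact Or.inl h
      · exact Or.inr ⟨(m, k), ⟨hm, hk, hmk⟩, he.symm⟩
    · rintro (rfl | ⟨p, hp, rfl⟩)
      · exact ⟨one_avoids132, one_avoids321⟩
      · exact ⟨shift_avoids132 hp.2.2, shift_avoids321 hp.2.2⟩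
  have hne1 : (1 : Equiv.Perm (Fin n)) ∉ (fun p : ℕ × ℕ => shiftPerm n p.1 p.2) '' ↑I := by
    rintro ⟨p, hp, he⟩
    rw [Finset.mem_coe, hmemI] at hp
    have e0 := congrArg (fun σ : Equiv.Perm (Fin n) => ((σ ⟨0, npos⟩ : Fin n) : ℕ)) he
    simp only at e0
    rw [shiftPerm_val n p.1 p.2 (by omega)] at e0
    simp only [Fin.val_mk] at e0
    rw [if_pos hp.2.1] at e0
    simp only [Equiv.Perm.one_apply] at e0
    omega
  have hinj : Set.InjOn (fun p : ℕ × ℕ => shiftPerm n p.1 p.2) ↑I := by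
    rintro p hp q hq he
    simp only [Finset.mem_coe, hmemI] at hp hq
    simp only at he
    have e0 := congrArg (fun σ : Equiv.Perm (Fin n) => ((σ ⟨0, npos⟩ : Fin n) : ℕ)) he
    rw [shiftPerm_val n p.1 p.2 (by omega), shiftPerm_val n q.1 q.2 (by omega)] at e0
    simp only [Fin.val_mk] at e0
    rw [if_pos hp.2.1, if_pos hq.2.1] at e0
    have h1 : p.1 = q.1 := by omega
    have hp2n : p.2 < n := by omega
    have e1 := congrArg (fun σ : Equiv.Perm (Fin n) => ((σ ⟨p.2, hp2n⟩ : Fin n) : ℕ)) he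
    rw [shiftPerm_val n p.1 p.2 (by omega), shiftPerm_val n q.1 q.2 (by omega)] at e1
    simp only [Fin.val_mk] at e1
    split_ifs at e1 <;>
      exact Prod.ext h1 (by omega)
  have h1 : Nat.card {π : Equiv.Perm (Fin n) //
      AvoidsPattern π pat132 ∧ AvoidsPattern π pat321}
      = Set.ncard {π : Equiv.Perm (Fin n) | AvoidsPattern π pat132 ∧ AvoidsPattern π pat321} :=
    Nat.card_coe_set_eq _
  rw [h1, hset, Set.ncard_insert_of_notMem hne1 (Set.toFinite _),
    Set.ncard_image_of_injOn hinj, Set.ncard_coe_finset, countI]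
  omega
end
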